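/- Let X and Y be connected finite polyhedra. Every n-valued map f: X → D_n(Y) has a partition into irreducibles f = {f_1,...,f_k} (possibly with k = 1), and this partition is unique up to the ordering of the maps f_i. -/

import Mathlib

open Function Set

/-- The ordered configuration space of `n` points in `Y`. -/
def OrdConf (n : ℕ) (Y : Type*) [TopologicalSpace Y] : Type _ :=
  {y : Fin n → Y // Function.Injective y}

instance (n : ℕ) (Y : Type*) [TopologicalSpace Y] : TopologicalSpace (OrdConf n Y) :=
  instTopologicalSpaceSubtype

/-- Two ordered configurations are equivalent when they differ by a permutation. -/
def confSetoid (n : ℕ) (Y : Type*) [TopologicalSpace Y] : Setoid (OrdConf n Y) where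
  r a b := ∃ σ : Equiv.Perm (Fin n), a.1 ∘ σ = b.1
  iseqv := by
    constructor
    · intro a; exact ⟨Equiv.refl _, rfl⟩
    · rintro a b ⟨σ, h⟩
      refine ⟨σ.symm, funext fun i => ?_⟩
      have := congrFun h (σ.symm i)
      simpa using this.symm
    · rintro a b c ⟨σ, h1⟩ ⟨τ, h2⟩
      refine ⟨τ.trans σ, funext fun i => ?_⟩
      have h1' := congrFun h1 (τ i)
      have h2' := congrFun h2 i
      simp only [Function.comp_apply] at h1' h2' ⊢
      simp [Equiv.trans_apply, h1', h2']

/-- The unordered configuration space `D_n(Y)` of `n` points in `Y`,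
with the quotient topology. -/
def UnordConf (n : ℕ) (Y : Type*) [TopologicalSpace Y] : Type _ :=
  Quotient (confSetoid n Y)

instance (n : ℕ) (Y : Type*) [TopologicalSpace Y] : TopologicalSpace (UnordConf n Y) :=
  instTopologicalSpaceQuotient

/-- The underlying `n`-element subset of `Y` determined by an unordered configuration. -/
def UnordConf.values {n : ℕ} {Y : Type*} [TopologicalSpace Y] : UnordConf n Y → Set Y :=
  Quotient.lift (fun a => Set.range a.1) (by
    rintro a b ⟨σ, h⟩
    show Set.range a.1 = Set.range b.1
    rw [← h, Set.range_comp]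
    simp)

/-- An `n`-valued map from `X` to `Y` is a continuous map `X → D_n(Y)`. -/
abbrev NValuedMap (X Y : Type*) [TopologicalSpace X] [TopologicalSpace Y] (n : ℕ) :=
  C(X, UnordConf n Y)

/-- `g` is a submap of `f` when `g(x) ⊆ f(x)` for all `x`. -/
def IsSubmap {X Y : Type*} [TopologicalSpace X] [TopologicalSpace Y] {k n : ℕ}
    (g : NValuedMap X Y k) (f : NValuedMap X Y n) : Prop :=
  ∀ x : X, (g x).values ⊆ (f x).values

/-- An `n`-valued map is irreducible when it admits no proper (`k`-valued, `0 < k < n`) submap. -/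
def IsIrreducibleNV {X Y : Type*} [TopologicalSpace X] [TopologicalSpace Y] {n : ℕ}
    (f : NValuedMap X Y n) : Prop :=
  ¬ ∃ (k : ℕ) (g : NValuedMap X Y k), 0 < k ∧ k < n ∧ IsSubmap g f

/-- A partition of an `n`-valued map `f` into `l` multimaps:
a family of `kᵢ`-valued maps with `k₁ + ⋯ + k_l = n` whose values unite to those of `f`. -/
structure NVPartition {X Y : Type*} [TopologicalSpace X] [TopologicalSpace Y] {n : ℕ}
    (f : NValuedMap X Y n) (l : ℕ) where
  card : Fin l → ℕ
  card_pos : ∀ i, 0 < card i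
  maps : ∀ i, NValuedMap X Y (card i)
  sum_card : ∑ i, card i = n
  values_eq : ∀ x : X, (f x).values = ⋃ i, UnordConf.values ((maps i) x)

/-- A partition is into irreducibles when every member is irreducible. -/
def NVPartition.IsIrreduciblePartition {X Y : Type*} [TopologicalSpace X] [TopologicalSpace Y]
    {n : ℕ} {f : NValuedMap X Y n} {l : ℕ} (P : NVPartition f l) : Prop :=
  ∀ i, IsIrreducibleNV (P.maps i)

/-- A space is a (compact) finite polyhedron when it is homeomorphic to the underlying
space of a finite simplicial complex in some Euclidean space. -/
def IsFinitePolyhedron (X : Type*) [TopologicalSpace X] : Prop :=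
  ∃ (N : ℕ) (K : Geometry.SimplicialComplex ℝ (EuclideanSpace ℝ (Fin N))),
    K.faces.Finite ∧ Nonempty (X ≃ₜ K.space)

/-!
Near each point an `n`-valued map lifts to a continuous tuple of distinct points, and in terms
of such a lift every submap is given by a fixed set of indices. Hence complements and
intersections of submaps are again multivalued maps, and the number of points shared by two
submaps is locally constant. Existence: split off an irreducible submap of least cardinality and
induct on its complement. Uniqueness: on a connected space, two irreducible submaps that share a
point somewhere share a constant number of points, which form a submap of both, so they coincide.
-/

open Filter Topology

lemma Set.pairwise_disjoint_of_ncard_iUnion_eq_sum {ι α : Type*} [Fintype ι] {s : ι → Set α}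
    (hs : ∀ i, (s i).Finite) (h : (⋃ i, s i).ncard = ∑ i, (s i).ncard) :
    Pairwise (Disjoint on s) := by
  classical
  set t : ι → Finset α := fun i => (hs i).toFinset
  have himage : (Finset.univ.sigma t).image Sigma.snd = Finset.univ.biUnion t := by
    ext y; simp [t]
  have hinj : InjOn Sigma.snd (Finset.univ.sigma t : Set (Σ _ : ι, α)) := by
    apply Finset.injOn_of_card_image_eq
    rw [himage, Finset.card_sigma, ← ncard_coe_finset, Finset.coe_biUnion]
    simpa [t, ncard_eq_toFinset_card _ (hs _)] using h
  intro i j hij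
  refine disjoint_left.2 fun y hi hj => hij ?_
  exact congrArg Sigma.fst
    (@hinj ⟨i, y⟩ (by simpa [t] using hi) ⟨j, y⟩ (by simpa [t] using hj) rfl)

lemma injective_of_pairwise_disjoint_of_mem {ι α : Type*} {V : ι → Set α}
    (hd : Pairwise (Disjoint on V)) {y : ι → α} (hy : ∀ i, y i ∈ V i) : Injective y :=
  fun i j h => of_not_not fun hij => disjoint_left.1 (hd hij) (hy i) (h ▸ hy j)

def OrdConf.mk {n : ℕ} {Y : Type*} [TopologicalSpace Y] (y : Fin n → Y) (hy : Injective y) :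
    OrdConf n Y :=
  ⟨y, hy⟩

lemma OrdConf.isInducing_val {n : ℕ} {Y : Type*} [TopologicalSpace Y] :
    IsInducing (fun a : OrdConf n Y => a.1) :=
  IsInducing.subtypeVal

namespace UnordConf

variable {Y : Type*} [TopologicalSpace Y] {n m : ℕ}

def mk (a : OrdConf n Y) : UnordConf n Y :=
  Quotient.mk _ a

lemma values_mk (a : OrdConf n Y) : (mk a).values = range a.1 :=
  rfl

lemma continuous_mk : Continuous (mk : OrdConf n Y → UnordConf n Y) :=
  continuous_quotient_mk'

lemma isOpen_iff_isOpen_preimage_mk {s : Set (UnordConf n Y)} :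
    IsOpen s ↔ IsOpen (mk ⁻¹' s) :=
  isOpen_coinduced

lemma values_injective : Injective (values : UnordConf n Y → Set Y) := by
  rintro ⟨a⟩ ⟨b⟩ (h : range a.1 = range b.1)
  refine Quotient.sound ⟨(Equiv.ofInjective b.1 b.2).trans
    ((Equiv.setCongr h.symm).trans (Equiv.ofInjective a.1 a.2).symm), funext fun i => ?_⟩
  simp only [comp_apply, Equiv.trans_apply, Equiv.apply_ofInjective_symm]
  rfl

lemma values_finite (c : UnordConf n Y) : c.values.Finite := by
  rcases c with ⟨a⟩
  exact finite_range a.1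

lemma ncard_values (c : UnordConf n Y) : c.values.ncard = n := by
  rcases c with ⟨a⟩
  exact (ncard_range_of_injective a.2).trans (Nat.card_fin n)

lemma isOpen_setOf_values_subset {U : Set Y} (hU : IsOpen U) :
    IsOpen {c : UnordConf n Y | c.values ⊆ U} := by
  rw [isOpen_iff_isOpen_preimage_mk]
  have : mk ⁻¹' {c : UnordConf n Y | c.values ⊆ U} =
      ⋂ j, (fun a : OrdConf n Y => a.1 j) ⁻¹' U := by
    ext a; simp [values_mk, range_subset_iff]
  rw [this]
  exact isOpen_iInter_of_finite fun j =>
    hU.preimage ((continuous_apply j).comp continuous_subtype_val)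

lemma isOpen_setOf_values_inter_nonempty {U : Set Y} (hU : IsOpen U) :
    IsOpen {c : UnordConf n Y | (c.values ∩ U).Nonempty} := by
  rw [isOpen_iff_isOpen_preimage_mk]
  have : mk ⁻¹' {c : UnordConf n Y | (c.values ∩ U).Nonempty} =
      ⋃ j, (fun a : OrdConf n Y => a.1 j) ⁻¹' U := by
    ext a; simp [values_mk, Set.Nonempty]
  rw [this]
  exact isOpen_iUnion fun j => hU.preimage ((continuous_apply j).comp continuous_subtype_val)

/-- For pairwise disjoint `V : Fin n → Set Y`, the configurations with one point in each `V i`. -/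
def distributedIn {ι : Type*} (V : ι → Set Y) : Set (UnordConf n Y) :=
  {c | c.values ⊆ ⋃ i, V i ∧ ∀ i, (c.values ∩ V i).Nonempty}

lemma isOpen_distributedIn {ι : Type*} [Finite ι] {V : ι → Set Y} (hV : ∀ i, IsOpen (V i)) :
    IsOpen (distributedIn (n := n) V) := by
  rw [distributedIn, ofPred_and, ofPred_forall]
  exact (isOpen_setOf_values_subset (isOpen_iUnion hV)).inter <|
    isOpen_iInter_of_finite fun i => isOpen_setOf_values_inter_nonempty (hV i)

lemma exists_mem_distributedIn [T2Space Y] (c : UnordConf n Y) :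
    ∃ V : Fin n → Set Y, (∀ i, IsOpen (V i)) ∧ Pairwise (Disjoint on V) ∧
      c ∈ distributedIn V := by
  rcases c with ⟨a⟩
  obtain ⟨U, hU, hdisj⟩ := (finite_range a.1).t2_separation
  refine ⟨fun i => U (a.1 i), fun i => (hU _).2,
    fun i j hij => hdisj (mem_range_self i) (mem_range_self j) (a.2.ne hij), ?_, fun i => ?_⟩
  · rintro _ ⟨j, rfl⟩
    exact mem_iUnion.2 ⟨j, (hU _).1⟩
  · exact ⟨a.1 i, mem_range_self i, (hU _).1⟩

variable {V : Fin n → Set Y}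

open Classical in
/-- A section of `mk` which, on `distributedIn V`, lists the points in the order of the `V i`. -/
noncomputable def liftIn (hd : Pairwise (Disjoint on V)) (c : UnordConf n Y) : OrdConf n Y :=
  if hc : c ∈ distributedIn V then
    .mk (fun i => (hc.2 i).some) <|
      injective_of_pairwise_disjoint_of_mem hd fun i => (hc.2 i).some_mem.2
  else c.out

variable (hd : Pairwise (Disjoint on V))

lemma liftIn_mem {c : UnordConf n Y} (hc : c ∈ distributedIn V) (i : Fin n) :
    (liftIn hd c).1 i ∈ V i := by
  rw [liftIn, dif_pos hc]
  exact (hc.2 i).some_mem.2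

lemma mk_liftIn (c : UnordConf n Y) : mk (liftIn hd c) = c := by
  by_cases hc : c ∈ distributedIn V
  · apply values_injective
    have hsub : range (liftIn hd c).1 ⊆ c.values := by
      rintro _ ⟨i, rfl⟩
      rw [liftIn, dif_pos hc]
      exact (hc.2 i).some_mem.1
    rw [values_mk]
    exact eq_of_subset_of_ncard_le hsub (by rw [← values_mk, ncard_values, ncard_values])
      (values_finite c)
  · rw [liftIn, dif_neg hc]
    exact Quotient.out_eq c

lemma range_liftIn (c : UnordConf n Y) : range (liftIn hd c).1 = c.values := by
  rw [← values_mk, mk_liftIn]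

lemma liftIn_eq_of_mem {c : UnordConf n Y} (hc : c ∈ distributedIn V) {p : Y} {i : Fin n}
    (hp : p ∈ c.values) (hpV : p ∈ V i) : (liftIn hd c).1 i = p := by
  rw [← range_liftIn hd c] at hp
  obtain ⟨j, rfl⟩ := hp
  rw [of_not_not fun hij => disjoint_left.1 (hd hij) (liftIn_mem hd hc j) hpV]

lemma continuousAt_liftIn (hV : ∀ i, IsOpen (V i)) {c : UnordConf n Y}
    (hc : c ∈ distributedIn V) : ContinuousAt (liftIn hd) c := by
  rw [OrdConf.isInducing_val.continuousAt_iff, continuousAt_pi]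
  intro i
  rw [ContinuousAt, (nhds_basis_opens _).tendsto_right_iff]
  rintro O ⟨hO, hOopen⟩
  have hmeet : (c.values ∩ (V i ∩ O)).Nonempty :=
    ⟨_, range_liftIn hd c ▸ mem_range_self i, liftIn_mem hd hc i, hO⟩
  filter_upwards [(isOpen_distributedIn hV).mem_nhds hc,
    (isOpen_setOf_values_inter_nonempty ((hV i).inter hOopen)).mem_nhds hmeet]
    with c' hc' ⟨p, hp, hpV, hpO⟩
  rwa [comp_apply, liftIn_eq_of_mem hd hc' hp hpV]

lemma mem_distributedIn_iff_values_eq_image {c : UnordConf n Y} (hc : c ∈ distributedIn V)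
    {d : UnordConf m Y} (hdc : d.values ⊆ c.values) (A : Set (Fin n)) :
    d ∈ distributedIn (fun i : A => V i) ↔ d.values = (liftIn hd c).1 '' A := by
  constructor
  · rintro ⟨hcov, hmeet⟩
    apply Subset.antisymm
    · intro p hp
      obtain ⟨⟨i, hi⟩, hpV⟩ := mem_iUnion.1 (hcov hp)
      exact ⟨i, hi, liftIn_eq_of_mem hd hc (hdc hp) hpV⟩
    · rintro _ ⟨i, hi, rfl⟩
      obtain ⟨p, hp, hpV⟩ := hmeet ⟨i, hi⟩
      rwa [liftIn_eq_of_mem hd hc (hdc hp) hpV]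
  · intro h
    refine ⟨?_, fun ⟨i, hi⟩ => ⟨_, h ▸ mem_image_of_mem _ hi, liftIn_mem hd hc i⟩⟩
    rw [h]
    rintro _ ⟨i, hi, rfl⟩
    exact mem_iUnion.2 ⟨⟨i, hi⟩, liftIn_mem hd hc i⟩

end UnordConf

def OrdConf.comp {N m : ℕ} {Y : Type*} [TopologicalSpace Y] (a : OrdConf N Y)
    (e : Fin m ↪ Fin N) : OrdConf m Y :=
  .mk (a.1 ∘ e) (a.2.comp e.injective)

lemma OrdConf.continuous_comp {N m : ℕ} {Y : Type*} [TopologicalSpace Y] (e : Fin m ↪ Fin N) :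
    Continuous (fun a : OrdConf N Y => a.comp e) :=
  OrdConf.isInducing_val.continuous_iff.2 <|
    continuous_pi fun j => (continuous_apply (e j)).comp OrdConf.isInducing_val.continuous

lemma exists_embedding_range_eq {N m : ℕ} (A : Set (Fin N)) (hA : A.ncard = m) :
    ∃ e : Fin m ↪ Fin N, range e = A := by
  classical
  refine ⟨(A.toFinset.orderEmbOfFin (by rw [← hA, ncard_eq_toFinset_card'])).toEmbedding, ?_⟩
  simp [Finset.range_orderEmbOfFin]

section NValuedMap

variable {X Y : Type*} [TopologicalSpace X] [TopologicalSpace Y] {n m m₁ m₂ : ℕ}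

open UnordConf

theorem exists_nvmap_of_locally_image (S : X → Set Y) (hcard : ∀ x, (S x).ncard = m)
    (hloc : ∀ x₀, ∃ (N : ℕ) (F : X → OrdConf N Y) (A : Set (Fin N)),
      ContinuousAt F x₀ ∧ ∀ᶠ x in 𝓝 x₀, S x = (F x).1 '' A) :
    ∃ h : NValuedMap X Y m, ∀ x, (h x).values = S x := by
  choose N F A hF hS using hloc
  have hAcard : ∀ x₀, (A x₀).ncard = m := fun x₀ => by
    rw [← hcard x₀, (hS x₀).self_of_nhds, ncard_image_of_injective _ (F x₀ x₀).2]
  choose e he using fun x₀ => exists_embedding_range_eq (A x₀) (hAcard x₀)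
  have hval : ∀ x₀ x, (mk ((F x₀ x).comp (e x₀))).values = (F x₀ x).1 '' A x₀ := by
    intro x₀ x
    rw [values_mk, ← he x₀, ← range_comp]
    rfl
  set h : X → UnordConf m Y := fun x => mk ((F x x).comp (e x))
  have hh : ∀ x, (h x).values = S x := fun x => by rw [hval, (hS x).self_of_nhds]
  refine ⟨⟨h, continuous_iff_continuousAt.2 fun x₀ => ?_⟩, hh⟩
  have heq : (fun x => mk ((F x₀ x).comp (e x₀))) =ᶠ[𝓝 x₀] h := by
    filter_upwards [hS x₀] with x hx
    exact values_injective (by rw [hh, hval, hx])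
  exact (continuous_mk.continuousAt.comp
    ((OrdConf.continuous_comp _).continuousAt.comp (hF x₀))).congr heq

theorem exists_local_lift [T2Space Y] (f : NValuedMap X Y n) (x₀ : X) :
    ∃ F : X → OrdConf n Y, ContinuousAt F x₀ ∧ (∀ x, mk (F x) = f x) ∧
      ∀ {m : ℕ} (g : NValuedMap X Y m), IsSubmap g f →
        ∃ A : Set (Fin n), ∀ᶠ x in 𝓝 x₀, (g x).values = (F x).1 '' A := by
  obtain ⟨V, hV, hd, hf₀⟩ := exists_mem_distributedIn (f x₀)
  have hf : ∀ᶠ x in 𝓝 x₀, f x ∈ distributedIn V :=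
    f.continuous.continuousAt.preimage_mem_nhds ((isOpen_distributedIn hV).mem_nhds hf₀)
  refine ⟨fun x => liftIn hd (f x),
    (continuousAt_liftIn hd hV hf₀).comp f.continuous.continuousAt,
    fun x => mk_liftIn hd (f x), fun g hg => ?_⟩
  set A := (liftIn hd (f x₀)).1 ⁻¹' (g x₀).values
  have hg₀ : g x₀ ∈ distributedIn (fun i : A => V i) :=
    (mem_distributedIn_iff_values_eq_image hd hf₀ (hg x₀) A).2
      (image_preimage_eq_of_subset (range_liftIn hd (f x₀) ▸ hg x₀)).symm
  refine ⟨A, ?_⟩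
  filter_upwards [hf, g.continuous.continuousAt.preimage_mem_nhds
    ((isOpen_distributedIn fun i : A => hV i).mem_nhds hg₀)] with x hfx hgx
  exact (mem_distributedIn_iff_values_eq_image hd hfx (hg x) A).1 hgx

theorem IsSubmap.exists_compl [T2Space Y] {f : NValuedMap X Y n} {g : NValuedMap X Y m}
    (hg : IsSubmap g f) :
    ∃ h : NValuedMap X Y (n - m), ∀ x, (h x).values = (f x).values \ (g x).values := by
  refine exists_nvmap_of_locally_image _
    (fun x => by rw [ncard_sdiff (hg x) (values_finite _), ncard_values, ncard_values])
    fun x₀ => ?_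
  obtain ⟨F, hF, hfF, hsub⟩ := exists_local_lift f x₀
  obtain ⟨A, hA⟩ := hsub g hg
  refine ⟨n, F, Aᶜ, hF, ?_⟩
  filter_upwards [hA] with x hx
  rw [hx, ← hfF x, values_mk, ← image_univ, ← image_sdiff (F x).2, compl_eq_univ_sdiff]

lemma exists_local_image_inter [T2Space Y] {f : NValuedMap X Y n} {g₁ : NValuedMap X Y m₁}
    {g₂ : NValuedMap X Y m₂} (hg₁ : IsSubmap g₁ f) (hg₂ : IsSubmap g₂ f) (x₀ : X) :
    ∃ (F : X → OrdConf n Y) (A : Set (Fin n)), ContinuousAt F x₀ ∧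
      ∀ᶠ x in 𝓝 x₀, (g₁ x).values ∩ (g₂ x).values = (F x).1 '' A := by
  obtain ⟨F, hF, -, hsub⟩ := exists_local_lift f x₀
  obtain ⟨A₁, hA₁⟩ := hsub g₁ hg₁
  obtain ⟨A₂, hA₂⟩ := hsub g₂ hg₂
  refine ⟨F, A₁ ∩ A₂, hF, ?_⟩
  filter_upwards [hA₁, hA₂] with x hx₁ hx₂
  rw [hx₁, hx₂, image_inter (F x).2]

theorem isLocallyConstant_ncard_inter [T2Space Y] {f : NValuedMap X Y n}
    {g₁ : NValuedMap X Y m₁} {g₂ : NValuedMap X Y m₂} (hg₁ : IsSubmap g₁ f)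
    (hg₂ : IsSubmap g₂ f) :
    IsLocallyConstant fun x => ((g₁ x).values ∩ (g₂ x).values).ncard := by
  rw [IsLocallyConstant.iff_eventually_eq]
  intro x₀
  obtain ⟨F, A, -, hA⟩ := exists_local_image_inter hg₁ hg₂ x₀
  have hcard : ∀ᶠ x in 𝓝 x₀, ((g₁ x).values ∩ (g₂ x).values).ncard = A.ncard := by
    filter_upwards [hA] with x hx
    rw [hx, ncard_image_of_injective _ (F x).2]
  filter_upwards [hcard] with x hx
  rw [hx, hcard.self_of_nhds]

theorem exists_nvmap_inter [T2Space Y] {f : NValuedMap X Y n} {g₁ : NValuedMap X Y m₁}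
    {g₂ : NValuedMap X Y m₂} (hg₁ : IsSubmap g₁ f) (hg₂ : IsSubmap g₂ f) {c : ℕ}
    (hc : ∀ x, ((g₁ x).values ∩ (g₂ x).values).ncard = c) :
    ∃ h : NValuedMap X Y c, ∀ x, (h x).values = (g₁ x).values ∩ (g₂ x).values :=
  exists_nvmap_of_locally_image _ hc fun x₀ =>
    let ⟨F, A, hF, hA⟩ := exists_local_image_inter hg₁ hg₂ x₀
    ⟨n, F, A, hF, hA⟩

theorem IsIrreducibleNV.values_eq_of_isSubmap {g : NValuedMap X Y m} (hg : IsIrreducibleNV g)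
    {k : ℕ} {h : NValuedMap X Y k} (hk : 0 < k) (hh : IsSubmap h g) (x : X) :
    (h x).values = (g x).values := by
  have hle : k ≤ m := by
    simpa only [ncard_values] using ncard_le_ncard (hh x) (values_finite _)
  have hkm : k = m := le_antisymm hle (not_lt.1 fun hlt => hg ⟨k, h, hk, hlt, hh⟩)
  exact eq_of_subset_of_ncard_le (hh x) (by rw [ncard_values, ncard_values, hkm])
    (values_finite _)

theorem values_eq_of_irreducible_of_inter_nonempty [T2Space Y] [PreconnectedSpace X]
    {f : NValuedMap X Y n} {g₁ : NValuedMap X Y m₁} {g₂ : NValuedMap X Y m₂}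
    (hg₁ : IsSubmap g₁ f) (hg₂ : IsSubmap g₂ f) (h₁ : IsIrreducibleNV g₁)
    (h₂ : IsIrreducibleNV g₂) {x₀ : X}
    (hx₀ : ((g₁ x₀).values ∩ (g₂ x₀).values).Nonempty) (x : X) :
    (g₁ x).values = (g₂ x).values := by
  obtain ⟨h, hh⟩ := exists_nvmap_inter hg₁ hg₂ fun x =>
    (isLocallyConstant_ncard_inter hg₁ hg₂).apply_eq_of_preconnectedSpace x x₀
  have hpos : 0 < ((g₁ x₀).values ∩ (g₂ x₀).values).ncard :=
    (ncard_pos ((values_finite _).inter_of_left _)).2 hx₀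
  rw [← h₁.values_eq_of_isSubmap hpos (fun x => (hh x).subset.trans inter_subset_left),
    h₂.values_eq_of_isSubmap hpos (fun x => (hh x).subset.trans inter_subset_right)]

end NValuedMap

namespace NVPartition

variable {X Y : Type*} [TopologicalSpace X] [TopologicalSpace Y] {n l : ℕ}
  {f : NValuedMap X Y n}

open UnordConf

lemma isSubmap (P : NVPartition f l) (i : Fin l) : IsSubmap (P.maps i) f :=
  fun x => (P.values_eq x).symm ▸ subset_iUnion (fun j => (P.maps j x).values) i

lemma values_nonempty (P : NVPartition f l) (i : Fin l) (x : X) :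
    (P.maps i x).values.Nonempty :=
  nonempty_of_ncard_ne_zero (by rw [ncard_values]; exact (P.card_pos i).ne')

lemma exists_mem_values (P : NVPartition f l) {x : X} {y : Y} (hy : y ∈ (f x).values) :
    ∃ i, y ∈ (P.maps i x).values :=
  mem_iUnion.1 (P.values_eq x ▸ hy)

lemma pairwise_disjoint_values (P : NVPartition f l) (x : X) :
    Pairwise (Disjoint on fun i => (P.maps i x).values) :=
  pairwise_disjoint_of_ncard_iUnion_eq_sum (fun _ => values_finite _) <| by
    simp only [← P.values_eq, ncard_values, P.sum_card]

lemma eq_of_values_eq (P : NVPartition f l) {i j : Fin l} {x : X}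
    (h : (P.maps i x).values = (P.maps j x).values) : i = j :=
  of_not_not fun hij => by
    have hdisj := P.pairwise_disjoint_values x hij
    rw [onFun, h, disjoint_self] at hdisj
    exact (P.values_nonempty j x).ne_empty hdisj

theorem exists_values_eq_of_irreducible [T2Space Y] [PreconnectedSpace X] [Nonempty X]
    {l' : ℕ} (P : NVPartition f l) (P' : NVPartition f l') (hP : P.IsIrreduciblePartition)
    (hP' : P'.IsIrreduciblePartition) (i : Fin l') :
    ∃ j, ∀ x, (P'.maps i x).values = (P.maps j x).values := by
  obtain ⟨y, hy⟩ := P'.values_nonempty i (Classical.arbitrary X)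
  obtain ⟨j, hj⟩ := P.exists_mem_values (P'.isSubmap i _ hy)
  exact ⟨j, values_eq_of_irreducible_of_inter_nonempty (P'.isSubmap i) (P.isSubmap j) (hP' i)
    (hP j) ⟨y, hy, hj⟩⟩

theorem exists_equiv_of_irreducible [T2Space Y] [PreconnectedSpace X] [Nonempty X]
    {l' : ℕ} (P : NVPartition f l) (P' : NVPartition f l') (hP : P.IsIrreduciblePartition)
    (hP' : P'.IsIrreduciblePartition) :
    ∃ e : Fin l' ≃ Fin l, ∀ i x, (P'.maps i x).values = (P.maps (e i) x).values := by
  choose φ hφ using P.exists_values_eq_of_irreducible P' hP hP'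
  choose ψ hψ using P'.exists_values_eq_of_irreducible P hP' hP
  have x₀ : X := Classical.arbitrary X
  exact ⟨⟨φ, ψ, fun i => P'.eq_of_values_eq (x := x₀) (by rw [← hψ, hφ]),
    fun j => P.eq_of_values_eq (x := x₀) (by rw [← hφ, hψ])⟩, hφ⟩

def cons {k m : ℕ} {g : NValuedMap X Y k} {h : NValuedMap X Y m} (hk : 0 < k) (hn : k + m = n)
    (hf : ∀ x, (f x).values = (g x).values ∪ (h x).values) (P : NVPartition h l) :
    NVPartition f (l + 1) where
  card := Fin.cons k P.card
  card_pos := Fin.cases hk P.card_pos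
  maps := Fin.cases g P.maps
  sum_card := by rw [Fin.sum_cons, P.sum_card, hn]
  values_eq x := by
    ext y
    simp only [hf, P.values_eq, mem_union, mem_iUnion, Fin.exists_fin_succ]
    rfl

lemma isIrreduciblePartition_cons {k m : ℕ} {g : NValuedMap X Y k} {h : NValuedMap X Y m}
    (hk : 0 < k) (hn : k + m = n) (hf : ∀ x, (f x).values = (g x).values ∪ (h x).values)
    {P : NVPartition h l} (hg : IsIrreducibleNV g) (hP : P.IsIrreduciblePartition) :
    (cons hk hn hf P).IsIrreduciblePartition :=
  Fin.cases hg hP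

def ofZero (f : NValuedMap X Y 0) : NVPartition f 0 where
  card := Fin.elim0
  card_pos i := i.elim0
  maps i := i.elim0
  sum_card := rfl
  values_eq x := by
    rw [iUnion_of_empty, ← ncard_eq_zero (values_finite _), ncard_values]

end NVPartition

section Existence

variable {X Y : Type*} [TopologicalSpace X] [TopologicalSpace Y] {n : ℕ}

theorem exists_irreducible_isSubmap (f : NValuedMap X Y n) (hn : 0 < n) :
    ∃ (k : ℕ) (g : NValuedMap X Y k), 0 < k ∧ k ≤ n ∧ IsSubmap g f ∧
      IsIrreducibleNV g := by
  classical
  have hex : ∃ k, ∃ g : NValuedMap X Y k, 0 < k ∧ IsSubmap g f :=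
    ⟨n, f, hn, fun _ => subset_rfl⟩
  obtain ⟨g, hk, hg⟩ := Nat.find_spec hex
  refine ⟨_, g, hk, Nat.find_min' hex ⟨f, hn, fun _ => subset_rfl⟩, hg, ?_⟩
  rintro ⟨k', g', hk', hlt, hg'⟩
  exact Nat.find_min hex hlt ⟨g', hk', fun x => (hg' x).trans (hg x)⟩

theorem exists_irreducible_partition [T2Space Y] (f : NValuedMap X Y n) :
    ∃ (l : ℕ) (P : NVPartition f l), P.IsIrreduciblePartition := by
  induction n using Nat.strong_induction_on with
  | _ n ih =>
  rcases n.eq_zero_or_pos with rfl | hn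
  · exact ⟨0, NVPartition.ofZero f, fun i => i.elim0⟩
  obtain ⟨k, g, hk, hkn, hgf, hg⟩ := exists_irreducible_isSubmap f hn
  obtain ⟨h, hh⟩ := hgf.exists_compl
  obtain ⟨l, P, hP⟩ := ih (n - k) (by omega) h
  have hf : ∀ x, (f x).values = (g x).values ∪ (h x).values := fun x => by
    rw [hh, union_sdiff_cancel (hgf x)]
  exact ⟨l + 1, P.cons hk (by omega) hf, NVPartition.isIrreduciblePartition_cons hk _ hf hg hP⟩

end Existence

theorem statement_1_general {X Y : Type*} [TopologicalSpace X] [TopologicalSpace Y]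
    [ConnectedSpace X]
    (hY : IsFinitePolyhedron Y)
    {n : ℕ} (f : NValuedMap X Y n) :
    ∃ (k : ℕ) (P : NVPartition f k), P.IsIrreduciblePartition ∧
      ∀ (k' : ℕ) (P' : NVPartition f k'), P'.IsIrreduciblePartition →
        ∃ e : Fin k' ≃ Fin k, ∀ (i : Fin k') (x : X),
          UnordConf.values (P'.maps i x) = UnordConf.values (P.maps (e i) x) := by
  obtain ⟨N, K, -, ⟨eY⟩⟩ := hY
  have : T2Space Y := eY.symm.t2Space
  obtain ⟨k, P, hP⟩ := exists_irreducible_partition f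
  exact ⟨k, P, hP, fun k' P' hP' => P.exists_equiv_of_irreducible P' hP hP'⟩

theorem statement_1 {X Y : Type*} [TopologicalSpace X] [TopologicalSpace Y]
    [ConnectedSpace X] [ConnectedSpace Y]
    (hX : IsFinitePolyhedron X) (hY : IsFinitePolyhedron Y)
    {n : ℕ} (f : NValuedMap X Y n) :
    ∃ (k : ℕ) (P : NVPartition f k), P.IsIrreduciblePartition ∧
      ∀ (k' : ℕ) (P' : NVPartition f k'), P'.IsIrreduciblePartition →
        ∃ e : Fin k' ≃ Fin k, ∀ (i : Fin k') (x : X),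
          UnordConf.values (P'.maps i x) = UnordConf.values (P.maps (e i) x) :=
  statement_1_general hY f
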